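/- arXiv:2507.23389 — 5 statements merged into one kernel-verified Lean document; each statement's English description precedes it below -/
import Mathlib

section
/- In the setting where time is a causeless feature of an experiment with intervention E whose not-manipulated distribution is the holistic distribution of (P_T, D_t): the distribution process D_t has drift (i.e., D_t is not P_T-a.s. constant) if and only if the time-manipulation kernel t ↦ E_{𝔱}(t, ·) is not P_T-a.s. constant. -/
/-!
Both `D` and `Et` disintegrate `E0` with respect to `P_T`, so `P_T ⊗ₘ D = P_T ⊗ₘ Et` and, since
`𝒳` is countably generated, `D = Et` holds `P_T`-a.e. Changing a map on a `P_T`-null set changes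
`{(s, t) | f s ≠ f t}` only on a `P_T ⊗ P_T`-null set.
-/

open MeasureTheory ProbabilityTheory

namespace ProbabilityTheory.Kernel

lemma ae_eq_of_forall_setLIntegral_eq {α β : Type*} {mα : MeasurableSpace α}
    {mβ : MeasurableSpace β} [MeasurableSpace.CountableOrCountablyGenerated α β]
    {μ : Measure α} [IsFiniteMeasure μ] {κ η : Kernel α β} [IsFiniteKernel κ] [IsFiniteKernel η]
    (h : ∀ {s : Set α} {t : Set β}, MeasurableSet s → MeasurableSet t →
      ∫⁻ a in s, κ a t ∂μ = ∫⁻ a in s, η a t ∂μ) :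
    κ =ᵐ[μ] η :=
  ae_eq_of_compProd_eq <| Measure.ext_prod fun hs ht => by
    rw [Measure.compProd_apply_prod hs ht, Measure.compProd_apply_prod hs ht, h hs ht]

end ProbabilityTheory.Kernel

lemma MeasureTheory.Measure.prod_self_setOf_ne_congr {α β : Type*} [MeasurableSpace α]
    {μ : Measure α} [SFinite μ] {f g : α → β} (hfg : f =ᵐ[μ] g) :
    (μ.prod μ) {p : α × α | f p.1 ≠ f p.2} = (μ.prod μ) {p : α × α | g p.1 ≠ g p.2} := by
  refine measure_congr ?_
  filter_upwards [quasiMeasurePreserving_fst.ae_eq_comp hfg,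
    quasiMeasurePreserving_snd.ae_eq_comp hfg] with p h₁ h₂
  simp only [Function.comp_apply] at h₁ h₂
  change (f p.1 ≠ f p.2) = (g p.1 ≠ g p.2)
  rw [h₁, h₂]

/-- In the setting of Theorem 1 of the paper (time causeless, `E∅` the
holistic distribution), the process `D` has drift (i.e. `P_T² {(s,t) : D s ≠ D t} > 0`)
iff the time-manipulation kernel `Et` is not `P_T`-a.s. constant. -/
theorem stmt_5 {𝒳 𝒯 : Type*} [MeasurableSpace 𝒳] [StandardBorelSpace 𝒳]
    [MeasurableSpace 𝒯]
    (P_T : Measure 𝒯) [IsProbabilityMeasure P_T]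
    (D : Kernel 𝒯 𝒳) [IsMarkovKernel D]
    (Et : Kernel 𝒯 𝒳) [IsMarkovKernel Et]
    (E0 : Measure (𝒳 × 𝒯))
    (hhol : ∀ (A : Set 𝒳) (W : Set 𝒯), MeasurableSet A → MeasurableSet W →
      E0 (A ×ˢ W) = ∫⁻ t in W, D t A ∂P_T)
    (hcauseless : ∀ (A : Set 𝒳) (W : Set 𝒯), MeasurableSet A → MeasurableSet W →
      E0 (A ×ˢ W) = ∫⁻ t in W, Et t A ∂P_T) :
    0 < (P_T.prod P_T) {p : 𝒯 × 𝒯 | D p.1 ≠ D p.2} ↔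
    0 < (P_T.prod P_T) {p : 𝒯 × 𝒯 | Et p.1 ≠ Et p.2} := by
  have hae : D =ᵐ[P_T] Et := Kernel.ae_eq_of_forall_setLIntegral_eq fun hW hA => by
    rw [← hhol _ _ hA hW, hcauseless _ _ hA hW]
  rw [Measure.prod_self_setOf_ne_congr hae]
end

section
/- Let (G, P_f) be a Bayes network over features 𝔉 and let F ⊆ 𝔉 be closed under taking parents (i.e., pa(f) ⊆ F for all f ∈ F). Then for the joint distribution P_G, conditioning on X_F = x coincides with the do-intervention: P_G(· | do(X_F = x)) = P_G(· | X_F = x) for P_G-almost every x. -/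
open scoped ENNReal BigOperators

section AuxStmt7

variable {V : Type*} [Fintype V] [DecidableEq V]
    {S : V → Type*} [∀ v, Fintype (S v)] [∀ v, DecidableEq (S v)]

lemma stmt7_sumOut (E : V → V → Prop)
    (hacyclic : ∀ v, ¬ Relation.TransGen E v v)
    (k : ∀ _ : V, (∀ v, S v) → ℝ≥0∞)
    (hloc : ∀ (f : V) (x y : ∀ v, S v),
      (∀ g, E g f → x g = y g) → x f = y f → k f x = k f y)
    (hnorm : ∀ (f : V) (x : ∀ v, S v), ∑ a : S f, k f (Function.update x f a) = 1) :
    ∀ (t : Finset V) (x : ∀ v, S v),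
      (∑ y : ∀ v, S v, if ∀ w ∉ t, y w = x w then ∏ f ∈ t, k f y else 0) = 1 := by
  intro t
  induction t using Finset.strongInduction with
  | _ t IH =>
    intro x
    rcases t.eq_empty_or_nonempty with rfl | ht
    · have hc : ∀ y : ∀ v, S v, (∀ w ∉ (∅ : Finset V), y w = x w) ↔ y = x := by
        intro y
        constructor
        · intro h; funext w; exact h w (by simp)
        · rintro rfl; intro w _; rfl
      calc (∑ y : ∀ v, S v, if ∀ w ∉ (∅ : Finset V), y w = x w
              then ∏ f ∈ (∅ : Finset V), k f y else 0)
          = ∑ y : ∀ v, S v, if y = x then 1 else 0 := by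
            refine Finset.sum_congr rfl fun y _ => ?_
            simp only [Finset.prod_empty]
            by_cases h : y = x
            · rw [if_pos ((hc y).2 h), if_pos h]
            · rw [if_neg (fun h' => h ((hc y).1 h')), if_neg h]
        _ = 1 := by simp
    · -- find a sink `v` of `t`
      have htrans : IsTrans V (fun a b => Relation.TransGen E b a) :=
        ⟨fun a b c h1 h2 => h2.trans h1⟩
      have hirrefl : IsIrrefl V (fun a b => Relation.TransGen E b a) :=
        ⟨fun a h => hacyclic a h⟩
      have hwf : WellFounded (fun a b => Relation.TransGen E b a) :=
        Finite.wellFounded_of_trans_of_irrefl _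
      obtain ⟨v, hvt, hmin⟩ := hwf.has_min (↑t) (by exact_mod_cast ht)
      have hsink : ∀ f ∈ t, ¬ E v f := fun f hf hE =>
        hmin f hf (Relation.TransGen.single hE)
      set e := Equiv.piSplitAt v S with he
      have hv1 : ∀ (a : S v) (r : ∀ j : {j // j ≠ v}, S j), (e.symm (a, r)) v = a :=
        fun a r => congrArg Prod.fst (e.apply_symm_apply (a, r))
      have hv2 : ∀ (a : S v) (r : ∀ j : {j // j ≠ v}, S j) (w : V) (h : w ≠ v),
          (e.symm (a, r)) w = r ⟨w, h⟩ :=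
        fun a r w h => congrFun (congrArg Prod.snd (e.apply_symm_apply (a, r))) ⟨w, h⟩
      have hupd : ∀ (a b : S v) (r : ∀ j : {j // j ≠ v}, S j),
          Function.update (e.symm (b, r)) v a = e.symm (a, r) := by
        intro a b r
        funext w
        by_cases h : w = v
        · subst h; rw [Function.update_self, hv1]
        · rw [Function.update_of_ne h, hv2 b r w h, hv2 a r w h]
      set t' := t.erase v with ht'
      -- condition on the "rest" part
      set D : (∀ j : {j // j ≠ v}, S j) → Prop :=
        fun r => ∀ w, ∀ h : w ∉ t, r ⟨w, fun hw => h (hw ▸ hvt)⟩ = x w with hD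
      have hDdec : DecidablePred D := fun r => Fintype.decidableForallFintype
      set Q : (∀ j : {j // j ≠ v}, S j) → ℝ≥0∞ :=
        fun r => ∏ f ∈ t', k f (e.symm (x v, r)) with hQ
      -- rewrite the sum through the equivalence `e`
      have key : ∀ (g : (∀ w, S w) → ℝ≥0∞),
          (∑ y : ∀ w, S w, g y) = ∑ a : S v, ∑ r : ∀ j : {j // j ≠ v}, S j,
            g (e.symm (a, r)) := by
        intro g
        rw [← Equiv.sum_comp e.symm g, Fintype.sum_prod_type]
      -- pointwise: the condition transported
      have hcond : ∀ (a : S v) (r : ∀ j : {j // j ≠ v}, S j),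
          (∀ w ∉ t, (e.symm (a, r)) w = x w) ↔ D r := by
        intro a r
        constructor
        · intro h w hw
          have hwv : w ≠ v := fun hwv => hw (hwv ▸ hvt)
          rw [← hv2 a r w hwv]; exact h w hw
        · intro h w hw
          have hwv : w ≠ v := fun hwv => hw (hwv ▸ hvt)
          rw [hv2 a r w hwv]; exact h w hw
      -- the product over t', evaluated at (e.symm (a, r)), doesn't depend on a
      have hprodt' : ∀ (a : S v) (r : ∀ j : {j // j ≠ v}, S j),
          (∏ f ∈ t', k f (e.symm (a, r))) = Q r := by
        intro a r
        refine Finset.prod_congr rfl fun f hf => ?_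
        have hfv : f ≠ v := Finset.ne_of_mem_erase hf
        have hft : f ∈ t := Finset.mem_of_mem_erase hf
        refine hloc f _ _ ?_ ?_
        · intro g hg
          have hgv : g ≠ v := fun hgv => hsink f hft (hgv ▸ hg)
          rw [hv2 a r g hgv, hv2 (x v) r g hgv]
        · rw [hv2 a r f hfv, hv2 (x v) r f hfv]
      -- compute the LHS
      have step1 : (∑ y : ∀ w, S w, if ∀ w ∉ t, y w = x w then ∏ f ∈ t, k f y else 0)
          = ∑ r : ∀ j : {j // j ≠ v}, S j, if D r then Q r else 0 := by
        rw [key]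
        rw [Finset.sum_comm]
        refine Finset.sum_congr rfl fun r _ => ?_
        by_cases hDr : D r
        · rw [if_pos hDr]
          calc (∑ a : S v, if ∀ w ∉ t, (e.symm (a, r)) w = x w
                  then ∏ f ∈ t, k f (e.symm (a, r)) else 0)
              = ∑ a : S v, k v (e.symm (a, r)) * Q r := by
                refine Finset.sum_congr rfl fun a _ => ?_
                rw [if_pos ((hcond a r).2 hDr)]
                rw [← Finset.mul_prod_erase t _ hvt, ← ht', hprodt' a r]
            _ = (∑ a : S v, k v (e.symm (a, r))) * Q r := by
                rw [Finset.sum_mul]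
            _ = Q r := by
                have : (∑ a : S v, k v (e.symm (a, r))) = 1 := by
                  rw [← hnorm v (e.symm (x v, r))]
                  exact Finset.sum_congr rfl fun a _ => by rw [hupd a (x v) r]
                rw [this, one_mul]
        · rw [if_neg hDr]
          refine Finset.sum_eq_zero fun a _ => ?_
          rw [if_neg (fun h => hDr ((hcond a r).1 h))]
      -- compute the IH sum the same way
      have step2 : (∑ r : ∀ j : {j // j ≠ v}, S j, if D r then Q r else 0) = 1 := by
        have hIH := IH t' (Finset.erase_ssubset hvt) x
        rw [key] at hIH
        rw [← hIH]
        rw [Finset.sum_comm]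
        refine Finset.sum_congr rfl fun r _ => ?_
        have hcond' : ∀ a : S v,
            (∀ w ∉ t', (e.symm (a, r)) w = x w) ↔ a = x v ∧ D r := by
          intro a
          constructor
          · intro h
            refine ⟨?_, ?_⟩
            · rw [← hv1 a r]; exact h v (Finset.notMem_erase v t)
            · intro w hw
              have hwv : w ≠ v := fun hwv => hw (hwv ▸ hvt)
              rw [← hv2 a r w hwv]
              exact h w (fun hw' => hw (Finset.mem_of_mem_erase hw'))
          · rintro ⟨rfl, hDr⟩ w hw
            by_cases hwv : w = v
            · subst hwv; rw [hv1]
            · rw [hv2 _ r w hwv]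
              refine hDr w (fun hwt => hw (Finset.mem_erase.2 ⟨hwv, hwt⟩))
        by_cases hDr : D r
        · rw [if_pos hDr]
          symm
          calc (∑ a : S v, if ∀ w ∉ t', (e.symm (a, r)) w = x w
                  then ∏ f ∈ t', k f (e.symm (a, r)) else 0)
              = ∑ a : S v, if a = x v then Q r else 0 := by
                refine Finset.sum_congr rfl fun a _ => ?_
                by_cases ha : a = x v
                · rw [if_pos ((hcond' a).2 ⟨ha, hDr⟩), if_pos ha, hprodt' a r]
                · rw [if_neg (fun h => ha ((hcond' a).1 h).1), if_neg ha]
            _ = Q r := by rw [Finset.sum_ite_eq' Finset.univ (x v) fun _ => Q r]; simp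
        · rw [if_neg hDr]
          refine (Finset.sum_eq_zero fun a _ => ?_).symm
          rw [if_neg (fun h => hDr ((hcond' a).1 h).2)]
      rw [step1, step2]

end AuxStmt7

/-- In a Bayes network (here modelled discretely: finitely many features,
each with finitely many states, joint mass `P x = ∏ f, k f x` where the kernel `k f`
depends only on `x f` and the parent values), if `F` is closed under taking parents,
then conditioning on `X_F = ξ` coincides with the do-intervention `do(X_F = ξ)`
(whose mass on completions of `ξ` is `∏ f ∉ F, k f x`), for every `ξ` of positive
probability. -/
theorem stmt_7 {V : Type*} [Fintype V] [DecidableEq V]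
    {S : V → Type*} [∀ v, Fintype (S v)] [∀ v, DecidableEq (S v)]
    (E : V → V → Prop)
    (hacyclic : ∀ v, ¬ Relation.TransGen E v v)
    (k : ∀ _ : V, (∀ v, S v) → ℝ≥0∞)
    (hloc : ∀ (f : V) (x y : ∀ v, S v),
      (∀ g, E g f → x g = y g) → x f = y f → k f x = k f y)
    (hnorm : ∀ (f : V) (x : ∀ v, S v), ∑ a : S f, k f (Function.update x f a) = 1)
    (P : (∀ v, S v) → ℝ≥0∞) (hP : ∀ x, P x = ∏ f, k f x)
    (F : Finset V) (hFanc : ∀ f ∈ F, ∀ g, E g f → g ∈ F) :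
    ∀ ξ : ∀ v, S v,
      (∑ y : ∀ v, S v, if ∀ v ∈ F, y v = ξ v then P y else 0) ≠ 0 →
      ∀ x : ∀ v, S v, (∀ v ∈ F, x v = ξ v) →
        P x / (∑ y : ∀ v, S v, if ∀ v ∈ F, y v = ξ v then P y else 0) =
          ∏ f ∈ Fᶜ, k f x := by
  intro ξ hξ x hx
  -- the conditioning event, rephrased
  have hcondeq : ∀ y : ∀ v, S v,
      (∀ v ∈ F, y v = ξ v) ↔ (∀ w ∉ Fᶜ, y w = x w) := by
    intro y
    constructor
    · intro h w hw
      have hwF : w ∈ F := by simpa using hw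
      rw [h w hwF, hx w hwF]
    · intro h v hv
      rw [h v (by simp [hv]), hx v hv]
  -- the normalizing constant equals the product of the kernels over F
  have hZ : (∑ y : ∀ v, S v, if ∀ v ∈ F, y v = ξ v then P y else 0)
      = ∏ f ∈ F, k f x := by
    calc (∑ y : ∀ v, S v, if ∀ v ∈ F, y v = ξ v then P y else 0)
        = ∑ y : ∀ v, S v, (∏ f ∈ F, k f x) *
            (if ∀ w ∉ Fᶜ, y w = x w then ∏ f ∈ Fᶜ, k f y else 0) := by
          refine Finset.sum_congr rfl fun y _ => ?_
          by_cases h : ∀ v ∈ F, y v = ξ v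
          · rw [if_pos h, if_pos ((hcondeq y).1 h)]
            rw [hP y, ← Finset.prod_mul_prod_compl F (fun f => k f y)]
            congr 1
            refine Finset.prod_congr rfl fun f hf => ?_
            refine hloc f y x ?_ ?_
            · intro g hg
              have hgF : g ∈ F := hFanc f hf g hg
              rw [h g hgF, hx g hgF]
            · rw [h f hf, hx f hf]
          · rw [if_neg h, if_neg (fun h' => h ((hcondeq y).2 h')), mul_zero]
      _ = (∏ f ∈ F, k f x) *
            ∑ y : ∀ v, S v, (if ∀ w ∉ Fᶜ, y w = x w then ∏ f ∈ Fᶜ, k f y else 0) := by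
          rw [Finset.mul_sum]
      _ = ∏ f ∈ F, k f x := by
          rw [stmt7_sumOut E hacyclic k hloc hnorm Fᶜ x, mul_one]
  rw [hZ] at hξ ⊢
  -- the normalizing constant is finite
  have hle1 : ∀ f : V, k f x ≤ 1 := by
    intro f
    have : k f x = k f (Function.update x f (x f)) := by
      rw [Function.update_eq_self]
    rw [this, ← hnorm f x]
    exact Finset.single_le_sum (f := fun a => k f (Function.update x f a))
      (fun a _ => zero_le) (Finset.mem_univ (x f))
  have htop : (∏ f ∈ F, k f x) ≠ ⊤ := by
    refine ne_top_of_le_ne_top (by simp : (1:ℝ≥0∞) ≠ ⊤) ?_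
    exact Finset.prod_le_one (fun f _ => zero_le) (fun f _ => hle1 f)
  rw [hP x, ← Finset.prod_mul_prod_compl F (fun f => k f x), mul_comm,
    mul_div_assoc, ENNReal.div_self hξ htop, mul_one]
end

section
/- Let (G, P_f) be a Bayes network in which the node 𝔱 has no parents, and let F be any subset of features not containing 𝔱. Then the conditional distribution of the remaining variables given do(X_F = x) assigns to 𝔱 a marginal that may differ from P_G, but the quantity P_G(X_f ∈ A | do(X_F = x)) for f ∉ F ∪ {𝔱} does not depend on any value of T; in particular, if additionally P_G(X_f ∈ A | X_F = x, T = t) = P_G(X_f ∈ A | do(X_F = x)) for P_G-a.e. (x, t), then X_f is conditionally independent of T given X_F under P_G. -/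
open scoped ENNReal BigOperators

/-- Discrete Bayes network model with root (parentless) time node `𝔱`.
For `f ∉ F ∪ {𝔱}`, the do-intervened probability `P_G(X_f = a | do(X_F = ξ))`
(the sum below, which manifestly does not depend on any time value) is well defined;
if moreover the ordinary conditional `P_G(X_f = a | X_F = ξ, T = t)` coincides with it
whenever the conditioning event has positive mass, then `X_f` is conditionally
independent of `T` given `X_F` under `P_G`. -/
theorem stmt_8 {V : Type*} [Fintype V] [DecidableEq V]
    {S : V → Type*} [∀ v, Fintype (S v)] [∀ v, DecidableEq (S v)]
    (E : V → V → Prop)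
    (hacyclic : ∀ v, ¬ Relation.TransGen E v v)
    (k : ∀ _ : V, (∀ v, S v) → ℝ≥0∞)
    (hloc : ∀ (f : V) (x y : ∀ v, S v),
      (∀ g, E g f → x g = y g) → x f = y f → k f x = k f y)
    (hnorm : ∀ (f : V) (x : ∀ v, S v), ∑ a : S f, k f (Function.update x f a) = 1)
    (P : (∀ v, S v) → ℝ≥0∞) (hP : ∀ x, P x = ∏ g, k g x)
    (𝔱 : V) (hroot : ∀ g, ¬ E g 𝔱)
    (F : Finset V) (h𝔱F : 𝔱 ∉ F) (f : V) (hfF : f ∉ F) (hf𝔱 : f ≠ 𝔱)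
    -- the ordinary conditional given `X_F` and `T` equals the (t-invariant)
    -- do-intervened probability of `X_f = a` under `do(X_F = ξ)`:
    (hcond : ∀ ξ : ∀ v, S v,
      (∑ y : ∀ v, S v, if (∀ v ∈ F, y v = ξ v) ∧ y 𝔱 = ξ 𝔱 then P y else 0) ≠ 0 →
      ∀ a : S f,
        (∑ y : ∀ v, S v,
            if (∀ v ∈ F, y v = ξ v) ∧ y 𝔱 = ξ 𝔱 ∧ y f = a then P y else 0) /
          (∑ y : ∀ v, S v, if (∀ v ∈ F, y v = ξ v) ∧ y 𝔱 = ξ 𝔱 then P y else 0) =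
        ∑ x : ∀ v, S v,
          if (∀ v ∈ F, x v = ξ v) ∧ x f = a then ∏ g ∈ Fᶜ, k g x else 0) :
    -- conclusion: `X_f ⫫ T | X_F` under `P`
    ∀ ξ : ∀ v, S v,
      (∑ y : ∀ v, S v, if (∀ v ∈ F, y v = ξ v) ∧ y 𝔱 = ξ 𝔱 ∧ y f = ξ f then P y else 0) *
        (∑ y : ∀ v, S v, if ∀ v ∈ F, y v = ξ v then P y else 0) =
      (∑ y : ∀ v, S v, if (∀ v ∈ F, y v = ξ v) ∧ y f = ξ f then P y else 0) *
        (∑ y : ∀ v, S v, if (∀ v ∈ F, y v = ξ v) ∧ y 𝔱 = ξ 𝔱 then P y else 0) := by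
  intro ξ
  have hk_le : ∀ (g : V) (x : ∀ v, S v), k g x ≤ 1 := by
    intro g x
    have h := hnorm g x
    calc k g x = k g (Function.update x g (x g)) := by rw [Function.update_eq_self]
    _ ≤ ∑ a : S g, k g (Function.update x g a) :=
        Finset.single_le_sum (f := fun a => k g (Function.update x g a))
          (fun a _ => zero_le) (Finset.mem_univ (x g))
    _ = 1 := h
  have hP_le : ∀ x, P x ≤ 1 := fun x => by
    rw [hP]
    exact Finset.prod_le_one (fun _ _ => zero_le) (fun g _ => hk_le g x)
  set Q : ℝ≥0∞ :=
    ∑ x : ∀ v, S v, if (∀ v ∈ F, x v = ξ v) ∧ x f = ξ f then ∏ g ∈ Fᶜ, k g x else 0 with hQ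
  set D : S 𝔱 → ℝ≥0∞ := fun t =>
    ∑ y : ∀ v, S v, if (∀ v ∈ F, y v = ξ v) ∧ y 𝔱 = t then P y else 0 with hD
  set N : S 𝔱 → ℝ≥0∞ := fun t =>
    ∑ y : ∀ v, S v, if (∀ v ∈ F, y v = ξ v) ∧ y 𝔱 = t ∧ y f = ξ f then P y else 0 with hN
  have hDtop : ∀ t, D t ≠ ⊤ := by
    intro t
    refine (ENNReal.sum_lt_top.mpr fun y _ => ?_).ne
    refine lt_of_le_of_lt ?_ ENNReal.one_lt_top
    split
    · exact hP_le y
    · exact zero_le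
  have hNle : ∀ t, N t ≤ D t := by
    intro t
    refine Finset.sum_le_sum fun y _ => ?_
    by_cases h : (∀ v ∈ F, y v = ξ v) ∧ y 𝔱 = t ∧ y f = ξ f
    · rw [if_pos h, if_pos ⟨h.1, h.2.1⟩]
    · rw [if_neg h]; exact zero_le
  have key : ∀ t, N t = Q * D t := by
    intro t
    by_cases hDz : D t = 0
    · have hNz : N t = 0 := le_antisymm (hDz ▸ hNle t) (zero_le)
      rw [hNz, hDz, mul_zero]
    · set ξ' : ∀ v, S v := Function.update ξ 𝔱 t with hξ'
      have h1 : ∀ v ∈ F, ξ' v = ξ v := fun v hv =>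
        Function.update_of_ne (by intro hvt; exact h𝔱F (hvt ▸ hv)) _ _
      have h2 : ξ' 𝔱 = t := Function.update_self _ _ _
      have eD : (∑ y : ∀ v, S v,
          if (∀ v ∈ F, y v = ξ' v) ∧ y 𝔱 = ξ' 𝔱 then P y else 0) = D t := by
        refine Finset.sum_congr rfl fun y _ => ?_
        refine if_congr ?_ rfl rfl
        rw [h2]
        exact and_congr_left' (forall₂_congr fun v hv => by rw [h1 v hv])
      have eN : (∑ y : ∀ v, S v,
          if (∀ v ∈ F, y v = ξ' v) ∧ y 𝔱 = ξ' 𝔱 ∧ y f = ξ f then P y else 0) = N t := by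
        refine Finset.sum_congr rfl fun y _ => ?_
        refine if_congr ?_ rfl rfl
        rw [h2]
        exact and_congr_left' (forall₂_congr fun v hv => by rw [h1 v hv])
      have eQ : (∑ x : ∀ v, S v,
          if (∀ v ∈ F, x v = ξ' v) ∧ x f = ξ f then ∏ g ∈ Fᶜ, k g x else 0) = Q := by
        refine Finset.sum_congr rfl fun x _ => ?_
        refine if_congr ?_ rfl rfl
        exact and_congr_left' (forall₂_congr fun v hv => by rw [h1 v hv])
      have hc := hcond ξ' (by rw [eD]; exact hDz) (ξ f)
      rw [eD, eN, eQ] at hc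
      calc N t = N t / D t * D t := (ENNReal.div_mul_cancel hDz (hDtop t)).symm
      _ = Q * D t := by rw [hc]
  have sumD : (∑ y : ∀ v, S v, if ∀ v ∈ F, y v = ξ v then P y else 0) = ∑ t : S 𝔱, D t := by
    simp only [hD]
    rw [Finset.sum_comm]
    refine Finset.sum_congr rfl fun y _ => ?_
    by_cases hA : ∀ v ∈ F, y v = ξ v
    · rw [if_pos hA,
        Finset.sum_congr rfl fun t _ => if_congr (and_iff_right hA) rfl (rfl : (0:ℝ≥0∞) = 0),
        Finset.sum_ite_eq]
      simp
    · rw [if_neg hA]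
      have h0 : ∀ t : S 𝔱,
          (if (∀ v ∈ F, y v = ξ v) ∧ y 𝔱 = t then P y else 0) = 0 :=
        fun t => if_neg (by tauto)
      simp [h0]
  have sumN : (∑ y : ∀ v, S v, if (∀ v ∈ F, y v = ξ v) ∧ y f = ξ f then P y else 0)
      = ∑ t : S 𝔱, N t := by
    simp only [hN]
    rw [Finset.sum_comm]
    refine Finset.sum_congr rfl fun y _ => ?_
    by_cases hA : (∀ v ∈ F, y v = ξ v) ∧ y f = ξ f
    · rw [if_pos hA,
        Finset.sum_congr rfl fun t _ =>
          if_congr (show ((∀ v ∈ F, y v = ξ v) ∧ y 𝔱 = t ∧ y f = ξ f) ↔ y 𝔱 = t by tauto)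
            rfl (rfl : (0:ℝ≥0∞) = 0),
        Finset.sum_ite_eq]
      simp
    · rw [if_neg hA]
      have h0 : ∀ t : S 𝔱,
          (if (∀ v ∈ F, y v = ξ v) ∧ y 𝔱 = t ∧ y f = ξ f then P y else 0) = 0 :=
        fun t => if_neg (by tauto)
      simp [h0]
  have goalL : (∑ y : ∀ v, S v,
      if (∀ v ∈ F, y v = ξ v) ∧ y 𝔱 = ξ 𝔱 ∧ y f = ξ f then P y else 0) = N (ξ 𝔱) := rfl
  have goalR : (∑ y : ∀ v, S v,
      if (∀ v ∈ F, y v = ξ v) ∧ y 𝔱 = ξ 𝔱 then P y else 0) = D (ξ 𝔱) := rfl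
  rw [goalL, goalR, sumD, sumN, key (ξ 𝔱), Finset.sum_congr rfl fun t _ => key t,
    ← Finset.mul_sum]
  ring
end

section
/- Let (G, P_f) be a faithful causal model of an experiment with intervention E on 𝒳 × 𝒯 equal to the holistic distribution of a distribution process (P_T, D_t) with time 𝔱 causeless. If F ⊆ 𝔉 is a drift-reversing intervention set, then F contains every child of 𝔱 in G. -/
open scoped ENNReal BigOperators

/-- Marginal mass of the event `{y : ∀ v ∈ Z, y v = x v}` under the joint mass `P`. -/
noncomputable def Mg {V : Type*} [Fintype V] [DecidableEq V] {S : V → Type*}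
    [∀ v, Fintype (S v)] [∀ v, DecidableEq (S v)]
    (P : (∀ v, S v) → ℝ≥0∞) (Z : Finset V) (x : ∀ v, S v) : ℝ≥0∞ :=
  ∑ y : ∀ v, S v, if ∀ v ∈ Z, y v = x v then P y else 0

/-- Conditional independence `X_A ⫫ X_B | X_Z` for the joint mass `P`. -/
def CondIndepSets {V : Type*} [Fintype V] [DecidableEq V] {S : V → Type*}
    [∀ v, Fintype (S v)] [∀ v, DecidableEq (S v)]
    (P : (∀ v, S v) → ℝ≥0∞) (A B Z : Finset V) : Prop :=
  ∀ x : ∀ v, S v, Mg P (A ∪ B ∪ Z) x * Mg P Z x = Mg P (A ∪ Z) x * Mg P (B ∪ Z) x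

/-- Collider/non-collider blocking of a walk, as in d-separation. -/
def IsBlocked {V : Type*} (E : V → V → Prop) (Z : Set V) (n : ℕ) (p : ℕ → V) : Prop :=
  ∃ i : ℕ, 0 < i ∧ i < n ∧
    (((E (p (i - 1)) (p i) ∧ E (p (i + 1)) (p i)) ∧
        ∀ w, Relation.ReflTransGen E (p i) w → w ∉ Z) ∨
      (¬(E (p (i - 1)) (p i) ∧ E (p (i + 1)) (p i)) ∧ p i ∈ Z))

/-- `Z` d-separates `a` from `b` in the directed graph `E`. -/
def DSep {V : Type*} (E : V → V → Prop) (Z : Set V) (a b : V) : Prop :=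
  ∀ (n : ℕ) (p : ℕ → V), 0 < n → p 0 = a → p n = b →
    (∀ i ≤ n, ∀ j ≤ n, p i = p j → i = j) →
    (∀ i < n, E (p i) (p (i + 1)) ∨ E (p (i + 1)) (p i)) →
    IsBlocked E Z n p

/-- `F` is a drift-reversing intervention set (Definition 5 of the paper, in the
discrete Bayes-network model, evaluated on singletons, which determine the measures):
for every time value `t` of positive probability and every configuration,
manipulating the features in `F` according to the time-`t` conditional distribution
produces the same joint outcome (over the remaining features, including time) as the
time-manipulation `do(T = t)` does, times `P_T`. -/
def DriftReversing {V : Type*} [Fintype V] [DecidableEq V] {S : V → Type*}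
    [∀ v, Fintype (S v)] [∀ v, DecidableEq (S v)]
    (k : ∀ _ : V, (∀ v, S v) → ℝ≥0∞) (P : (∀ v, S v) → ℝ≥0∞)
    (𝔱 : V) (F : Finset V) : Prop :=
  ∀ (x : ∀ v, S v) (t : S 𝔱),
    Mg P {𝔱} (Function.update x 𝔱 t) ≠ 0 →
    (∏ g ∈ Fᶜ, k g x) *
        (Mg P (insert 𝔱 F) (Function.update x 𝔱 t) / Mg P {𝔱} (Function.update x 𝔱 t)) =
      (∏ g ∈ ({𝔱} : Finset V)ᶜ, k g (Function.update x 𝔱 t)) * Mg P {𝔱} x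


section MyAux
variable {V : Type*} [Fintype V] [DecidableEq V] {S : V → Type*}
  [∀ v, Fintype (S v)] [∀ v, DecidableEq (S v)]

lemma my_mul_cancel {a b c : ℝ≥0∞} (h0 : a ≠ 0) (ht : a ≠ ⊤) (h : a * b = a * c) : b = c := by
  have h2 := congrArg (a⁻¹ * ·) h
  simpa [← mul_assoc, ENNReal.inv_mul_cancel h0 ht] using h2

lemma my_exists_sink {E : V → V → Prop} (hacyclic : ∀ v, ¬ Relation.TransGen E v v) :
    ∀ W : Finset V, W.Nonempty → ∃ g ∈ W, ∀ h ∈ W, ¬ Relation.TransGen E g h := by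
  intro W
  induction W using Finset.strongInduction with
  | _ W ih =>
    rintro ⟨g0, hg0⟩
    classical
    by_cases hc : ∀ h ∈ W, ¬ Relation.TransGen E g0 h
    · exact ⟨g0, hg0, hc⟩
    · push_neg at hc
      obtain ⟨h1, hh1, htg⟩ := hc
      have hss : W.filter (fun h => Relation.TransGen E g0 h) ⊂ W :=
        Finset.filter_ssubset.mpr ⟨g0, hg0, hacyclic g0⟩
      obtain ⟨g, hgW', hmax⟩ := ih _ hss ⟨h1, Finset.mem_filter.mpr ⟨hh1, htg⟩⟩
      refine ⟨g, Finset.filter_subset _ _ hgW', ?_⟩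
      intro h2 hh2 ht
      exact hmax h2 (Finset.mem_filter.mpr ⟨hh2, ((Finset.mem_filter.mp hgW').2).trans ht⟩) ht

lemma my_sum_out (E : V → V → Prop) (hacyclic : ∀ v, ¬ Relation.TransGen E v v)
    (k : ∀ _ : V, (∀ v, S v) → ℝ≥0∞)
    (hloc : ∀ (f : V) (x y : ∀ v, S v),
      (∀ g, E g f → x g = y g) → x f = y f → k f x = k f y)
    (hnorm : ∀ (f : V) (x : ∀ v, S v), ∑ a : S f, k f (Function.update x f a) = 1) :
    ∀ W : Finset V, ∀ x : ∀ v, S v,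
      ∑ y : ∀ v, S v, (if ∀ v ∉ W, y v = x v then ∏ h ∈ W, k h y else 0) = 1 := by
  classical
  intro W
  induction W using Finset.strongInduction with
  | _ W ih =>
    intro x
    by_cases hW : W.Nonempty
    · obtain ⟨g, hgW, hsink⟩ := my_exists_sink hacyclic W hW
      have hEg : ∀ h ∈ W, ¬ E g h := fun h hh hE => hsink h hh (Relation.TransGen.single hE)
      rw [← Finset.sum_filter]
      have key : ∑ y ∈ Finset.univ.filter (fun y : ∀ v, S v => ∀ v ∉ W, y v = x v),
            ∏ h ∈ W, k h y
          = ∑ p ∈ (Finset.univ.filter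
                (fun z : ∀ v, S v => ∀ v ∉ W.erase g, z v = x v)) ×ˢ
                (Finset.univ : Finset (S g)),
            ∏ h ∈ W, k h (Function.update p.1 g p.2) := by
        refine Finset.sum_nbij' (i := fun y => (Function.update y g (x g), y g))
          (j := fun p => Function.update p.1 g p.2) ?_ ?_ ?_ ?_ ?_
        · intro y hy
          rw [Finset.mem_filter] at hy
          refine Finset.mem_product.mpr ⟨Finset.mem_filter.mpr ⟨Finset.mem_univ _, ?_⟩,
            Finset.mem_univ _⟩
          intro v hv
          dsimp only
          rcases eq_or_ne v g with rfl | hvg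
          · simp
          · rw [Function.update_of_ne hvg]
            exact hy.2 v (fun hvW => hv (Finset.mem_erase.mpr ⟨hvg, hvW⟩))
        · rintro ⟨z, a⟩ hp
          obtain ⟨hz, -⟩ := Finset.mem_product.mp hp
          rw [Finset.mem_filter] at hz
          refine Finset.mem_filter.mpr ⟨Finset.mem_univ _, ?_⟩
          intro v hv
          have hvg : v ≠ g := fun h => hv (h ▸ hgW)
          dsimp only
          rw [Function.update_of_ne hvg]
          exact hz.2 v (fun hvW => hv (Finset.mem_of_mem_erase hvW))
        · intro y _
          simp [Function.update_idem]
        · rintro ⟨z, a⟩ hp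
          obtain ⟨hz, -⟩ := Finset.mem_product.mp hp
          rw [Finset.mem_filter] at hz
          have hzg : z g = x g := hz.2 g (by simp)
          simp [Function.update_idem, hzg]
        · intro y hy
          congr 1
          rw [Function.update_idem, Function.update_eq_self]
      rw [key, Finset.sum_product]
      have inner : ∀ z ∈ Finset.univ.filter
          (fun z : ∀ v, S v => ∀ v ∉ W.erase g, z v = x v),
          ∑ a : S g, ∏ h ∈ W, k h (Function.update z g a)
            = ∏ h ∈ W.erase g, k h z := by
        intro z _
        have step : ∀ a : S g, ∏ h ∈ W, k h (Function.update z g a)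
            = k g (Function.update z g a) * ∏ h ∈ W.erase g, k h z := by
          intro a
          rw [← Finset.mul_prod_erase W _ hgW]
          congr 1
          refine Finset.prod_congr rfl (fun h hh => ?_)
          have hhg : h ≠ g := (Finset.mem_erase.mp hh).1
          refine hloc h _ _ (fun p hp => ?_) (Function.update_of_ne hhg _ _)
          have hpg : p ≠ g := fun hpe => hEg h (Finset.mem_of_mem_erase hh) (hpe ▸ hp)
          exact Function.update_of_ne hpg _ _
        rw [Finset.sum_congr rfl (fun a _ => step a), ← Finset.sum_mul, hnorm, one_mul]
      rw [Finset.sum_congr rfl inner, Finset.sum_filter]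
      exact ih _ (Finset.erase_ssubset hgW) x
    · rw [Finset.not_nonempty_iff_eq_empty] at hW
      subst hW
      have : ∀ y : ∀ v, S v,
          (if ∀ v ∉ (∅ : Finset V), y v = x v then ∏ h ∈ (∅ : Finset V), k h y else 0)
            = if y = x then 1 else 0 := by
        intro y
        simp [funext_iff]
      rw [Finset.sum_congr rfl (fun y _ => this y)]
      simp
end MyAux

section MyAux2
variable {V : Type*} [Fintype V] [DecidableEq V] {S : V → Type*}
  [∀ v, Fintype (S v)] [∀ v, DecidableEq (S v)]

lemma my_Mg_univ (P : (∀ v, S v) → ℝ≥0∞) (x : ∀ v, S v) :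
    Mg P Finset.univ x = P x := by
  unfold Mg
  have h : ∀ y : ∀ v, S v,
      (if ∀ v ∈ Finset.univ, y v = x v then P y else 0) = if y = x then P y else 0 := by
    intro y; simp [funext_iff]
  rw [Finset.sum_congr rfl (fun y _ => h y)]
  simp

lemma my_Mg_insert_sum (P : (∀ v, S v) → ℝ≥0∞) (𝔱 : V) (Z : Finset V) (h𝔱Z : 𝔱 ∉ Z)
    (x : ∀ v, S v) :
    Mg P Z x = ∑ t' : S 𝔱, Mg P (insert 𝔱 Z) (Function.update x 𝔱 t') := by
  classical
  unfold Mg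
  symm
  have h1 : ∀ (t' : S 𝔱) (y : ∀ v, S v),
      (if ∀ v ∈ insert 𝔱 Z, y v = Function.update x 𝔱 t' v then P y else 0)
        = if y 𝔱 = t' then (if ∀ v ∈ Z, y v = x v then P y else 0) else 0 := by
    intro t' y
    have hc : (∀ v ∈ insert 𝔱 Z, y v = Function.update x 𝔱 t' v)
        ↔ (y 𝔱 = t' ∧ ∀ v ∈ Z, y v = x v) := by
      rw [Finset.forall_mem_insert]
      constructor
      · rintro ⟨ha, hb⟩
        refine ⟨by simpa using ha, fun v hv => ?_⟩
        have hv𝔱 : v ≠ 𝔱 := fun h => h𝔱Z (h ▸ hv)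
        simpa [Function.update_of_ne hv𝔱] using hb v hv
      · rintro ⟨ha, hb⟩
        refine ⟨by simpa using ha, fun v hv => ?_⟩
        have hv𝔱 : v ≠ 𝔱 := fun h => h𝔱Z (h ▸ hv)
        simpa [Function.update_of_ne hv𝔱] using hb v hv
    by_cases h : y 𝔱 = t'
    · by_cases h2 : ∀ v ∈ Z, y v = x v
      · rw [if_pos (hc.mpr ⟨h, h2⟩), if_pos h, if_pos h2]
      · rw [if_neg (fun hx => h2 (hc.mp hx).2), if_pos h, if_neg h2]
    · rw [if_neg (fun hx => h (hc.mp hx).1), if_neg h]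
  calc ∑ t' : S 𝔱, ∑ y : ∀ v, S v,
        (if ∀ v ∈ insert 𝔱 Z, y v = Function.update x 𝔱 t' v then P y else 0)
      = ∑ t' : S 𝔱, ∑ y : ∀ v, S v,
        (if y 𝔱 = t' then (if ∀ v ∈ Z, y v = x v then P y else 0) else 0) :=
        Finset.sum_congr rfl (fun t' _ => Finset.sum_congr rfl (fun y _ => h1 t' y))
    _ = ∑ y : ∀ v, S v, ∑ t' : S 𝔱,
        (if y 𝔱 = t' then (if ∀ v ∈ Z, y v = x v then P y else 0) else 0) :=
        Finset.sum_comm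
    _ = ∑ y : ∀ v, S v, (if ∀ v ∈ Z, y v = x v then P y else 0) := by
        refine Finset.sum_congr rfl (fun y _ => ?_)
        simp

lemma my_Mg_zero (k : ∀ _ : V, (∀ v, S v) → ℝ≥0∞)
    (P : (∀ v, S v) → ℝ≥0∞) (hP : ∀ x, P x = ∏ g, k g x) (𝔱 : V)
    (hk : ∀ x y : ∀ v, S v, x 𝔱 = y 𝔱 → k 𝔱 x = k 𝔱 y)
    (Z : Finset V) (h𝔱Z : 𝔱 ∈ Z) (x : ∀ v, S v) (hκ : k 𝔱 x = 0) :
    Mg P Z x = 0 := by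
  unfold Mg
  refine Finset.sum_eq_zero (fun y _ => ?_)
  split_ifs with h
  · rw [hP]
    exact Finset.prod_eq_zero (Finset.mem_univ 𝔱) (by rw [hk y x (h 𝔱 h𝔱Z)]; exact hκ)
  · rfl

lemma my_Mg_root (E : V → V → Prop) (hacyclic : ∀ v, ¬ Relation.TransGen E v v)
    (k : ∀ _ : V, (∀ v, S v) → ℝ≥0∞)
    (hloc : ∀ (f : V) (x y : ∀ v, S v),
      (∀ g, E g f → x g = y g) → x f = y f → k f x = k f y)
    (hnorm : ∀ (f : V) (x : ∀ v, S v), ∑ a : S f, k f (Function.update x f a) = 1)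
    (P : (∀ v, S v) → ℝ≥0∞) (hP : ∀ x, P x = ∏ g, k g x)
    (𝔱 : V) (hroot : ∀ g, ¬ E g 𝔱) (x : ∀ v, S v) :
    Mg P {𝔱} x = k 𝔱 x := by
  classical
  unfold Mg
  have h1 : ∀ y : ∀ v, S v,
      (if ∀ v ∈ ({𝔱} : Finset V), y v = x v then P y else 0)
        = k 𝔱 x * (if ∀ v ∉ Finset.univ.erase 𝔱, y v = x v
            then ∏ h ∈ Finset.univ.erase 𝔱, k h y else 0) := by
    intro y
    have hc : (∀ v ∈ ({𝔱} : Finset V), y v = x v)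
        ↔ (∀ v ∉ Finset.univ.erase 𝔱, y v = x v) := by
      simp [Finset.mem_erase]
    by_cases h : ∀ v ∉ Finset.univ.erase 𝔱, y v = x v
    · rw [if_pos (hc.mpr h), if_pos h, hP]
      have hky : k 𝔱 y = k 𝔱 x :=
        hloc 𝔱 y x (fun g hg => absurd hg (hroot g)) (h 𝔱 (by simp))
      rw [← Finset.mul_prod_erase Finset.univ _ (Finset.mem_univ 𝔱), hky]
    · rw [if_neg (fun hx => h (hc.mp hx)), if_neg h, mul_zero]
  rw [Finset.sum_congr rfl (fun y _ => h1 y), ← Finset.mul_sum,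
    my_sum_out E hacyclic k hloc hnorm _ x, mul_one]

end MyAux2

/-- In a faithful causal model (discrete Bayes-network model of the
experiment with intervention, with time `𝔱` a causeless, i.e. parentless, node),
every drift-reversing intervention set `F` contains all children of `𝔱`. -/
theorem stmt_13 {V : Type*} [Fintype V] [DecidableEq V]
    {S : V → Type*} [∀ v, Fintype (S v)] [∀ v, DecidableEq (S v)]
    (E : V → V → Prop)
    (hacyclic : ∀ v, ¬ Relation.TransGen E v v)
    (k : ∀ _ : V, (∀ v, S v) → ℝ≥0∞)
    (hloc : ∀ (f : V) (x y : ∀ v, S v),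
      (∀ g, E g f → x g = y g) → x f = y f → k f x = k f y)
    (hnorm : ∀ (f : V) (x : ∀ v, S v), ∑ a : S f, k f (Function.update x f a) = 1)
    (P : (∀ v, S v) → ℝ≥0∞) (hP : ∀ x, P x = ∏ g, k g x)
    (𝔱 : V) (hroot : ∀ g, ¬ E g 𝔱)
    (hfaithful : ∀ A B Z : Finset V,
      (∀ a ∈ A, a ∉ B ∧ a ∉ Z) → (∀ b ∈ B, b ∉ Z) →
      CondIndepSets P A B Z → ∀ a ∈ A, ∀ b ∈ B, DSep E (↑Z) a b)
    (F : Finset V) (h𝔱F : 𝔱 ∉ F)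
    (hDR : DriftReversing k P 𝔱 F) :
    ∀ f, E 𝔱 f → f ∈ F := by
  classical
  intro f hEf
  by_contra hfF
  have hf𝔱 : f ≠ 𝔱 := fun h => hroot 𝔱 (h ▸ hEf)
  have hroot' : ∀ x : ∀ v, S v, Mg P {𝔱} x = k 𝔱 x :=
    my_Mg_root E hacyclic k hloc hnorm P hP 𝔱 hroot
  have hk𝔱 : ∀ x y : ∀ v, S v, x 𝔱 = y 𝔱 → k 𝔱 x = k 𝔱 y := fun x y h =>
    hloc 𝔱 x y (fun g hg => absurd hg (hroot g)) h
  have hktop : ∀ x : ∀ v, S v, k 𝔱 x ≠ ⊤ := by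
    intro x
    have hle : k 𝔱 x ≤ 1 := by
      have hx : k 𝔱 x = k 𝔱 (Function.update x 𝔱 (x 𝔱)) := by
        rw [Function.update_eq_self]
      rw [← hnorm 𝔱 x, hx]
      exact Finset.single_le_sum (f := fun a => k 𝔱 (Function.update x 𝔱 a))
        (fun i _ => zero_le) (Finset.mem_univ (x 𝔱))
    exact ne_top_of_le_ne_top ENNReal.one_ne_top hle
  have hzero : ∀ x : ∀ v, S v, k 𝔱 x = 0 → Mg P (insert 𝔱 F) x = 0 := fun x h =>
    my_Mg_zero k P hP 𝔱 hk𝔱 _ (Finset.mem_insert_self 𝔱 F) x h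
  have hP0 : ∀ x : ∀ v, S v, k 𝔱 x = 0 → P x = 0 := fun x h => by
    rw [hP]; exact Finset.prod_eq_zero (Finset.mem_univ 𝔱) h
  have hprod : ∀ x : ∀ v, S v, ∏ g ∈ Fᶜ, k g x = k 𝔱 x * ∏ g ∈ Fᶜ.erase 𝔱, k g x :=
    fun x => (Finset.mul_prod_erase Fᶜ _ (Finset.mem_compl.mpr h𝔱F)).symm
  have hprodT : ∀ x : ∀ v, S v, (∏ g ∈ ({𝔱} : Finset V)ᶜ, k g x) * k 𝔱 x = P x := by
    intro x
    rw [hP, mul_comm, ← Finset.mul_prod_erase Finset.univ _ (Finset.mem_univ 𝔱)]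
    congr 1
    refine Finset.prod_congr ?_ (fun _ _ => rfl)
    ext v
    simp [Finset.mem_erase]
  -- (†): the factorization P x = Mg P (insert 𝔱 F) x * ∏_{g ∈ Fᶜ.erase 𝔱} k g x
  have hdag : ∀ x : ∀ v, S v,
      P x = Mg P (insert 𝔱 F) x * ∏ g ∈ Fᶜ.erase 𝔱, k g x := by
    intro x
    by_cases hκ : k 𝔱 x = 0
    · rw [hP0 x hκ, hzero x hκ, zero_mul]
    · have h0 : Mg P {𝔱} (Function.update x 𝔱 (x 𝔱)) ≠ 0 := by
        rw [Function.update_eq_self, hroot']; exact hκ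
      have hd := hDR x (x 𝔱) h0
      rw [Function.update_eq_self] at hd
      rw [hroot', hprod, hprodT] at hd
      rw [← hd, div_eq_mul_inv]
      have hr : k 𝔱 x * (∏ g ∈ Fᶜ.erase 𝔱, k g x)
            * (Mg P (insert 𝔱 F) x * (k 𝔱 x)⁻¹)
          = (k 𝔱 x * (k 𝔱 x)⁻¹)
            * (Mg P (insert 𝔱 F) x * ∏ g ∈ Fᶜ.erase 𝔱, k g x) := by ring
      rw [hr, ENNReal.mul_inv_cancel hκ (hktop x), one_mul]
  -- (‡): the exchange identity
  have hswap : ∀ (x : ∀ v, S v) (t : S 𝔱), k 𝔱 x ≠ 0 →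
      (∏ g ∈ Fᶜ.erase 𝔱, k g x) * Mg P (insert 𝔱 F) (Function.update x 𝔱 t)
        = Mg P (insert 𝔱 F) (Function.update x 𝔱 t)
            * ∏ g ∈ Fᶜ.erase 𝔱, k g (Function.update x 𝔱 t) := by
    intro x t hκ
    by_cases hκt : k 𝔱 (Function.update x 𝔱 t) = 0
    · rw [hzero _ hκt, mul_zero, zero_mul]
    · have h0 : Mg P {𝔱} (Function.update x 𝔱 t) ≠ 0 := by
        rw [hroot']; exact hκt
      have hd := hDR x t h0
      rw [hroot', hroot', hprod] at hd
      have hd2 := congrArg (· * k 𝔱 (Function.update x 𝔱 t)) hd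
      rw [mul_assoc, ENNReal.div_mul_cancel hκt (hktop _)] at hd2
      have hr : (∏ g ∈ ({𝔱} : Finset V)ᶜ, k g (Function.update x 𝔱 t)) * k 𝔱 x
            * k 𝔱 (Function.update x 𝔱 t)
          = k 𝔱 x * (Mg P (insert 𝔱 F) (Function.update x 𝔱 t)
            * ∏ g ∈ Fᶜ.erase 𝔱, k g (Function.update x 𝔱 t)) := by
        rw [← hdag (Function.update x 𝔱 t), ← hprodT (Function.update x 𝔱 t)]
        ring
      rw [hr] at hd2
      rw [mul_assoc] at hd2
      exact my_mul_cancel hκ (hktop x) hd2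
  -- conditional independence
  have hCI : CondIndepSets P ((insert 𝔱 F)ᶜ) {𝔱} F := by
    intro x
    have hU1 : (insert 𝔱 F)ᶜ ∪ {𝔱} ∪ F = Finset.univ := by
      ext v
      simp only [Finset.mem_union, Finset.mem_compl, Finset.mem_insert,
        Finset.mem_singleton, Finset.mem_univ, iff_true]
      tauto
    have hU2 : (insert 𝔱 F)ᶜ ∪ F = Finset.univ.erase 𝔱 := by
      ext v
      simp only [Finset.mem_union, Finset.mem_compl, Finset.mem_insert,
        Finset.mem_erase, Finset.mem_univ, and_true]
      constructor
      · rintro (h | h)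
        · exact fun he => h (Or.inl he)
        · exact fun he => h𝔱F (he ▸ h)
      · intro h
        by_cases hvF : v ∈ F
        · exact Or.inr hvF
        · exact Or.inl (fun hc => hc.elim h hvF)
    have hU3 : ({𝔱} : Finset V) ∪ F = insert 𝔱 F := by
      ext v; simp [Finset.mem_insert]
    rw [hU1, hU2, hU3, my_Mg_univ,
      my_Mg_insert_sum P 𝔱 F h𝔱F x,
      my_Mg_insert_sum P 𝔱 (Finset.univ.erase 𝔱) (by simp) x,
      Finset.insert_erase (Finset.mem_univ 𝔱)]
    have hMu : ∀ t' : S 𝔱, Mg P Finset.univ (Function.update x 𝔱 t')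
        = P (Function.update x 𝔱 t') := fun t' => my_Mg_univ P _
    rw [Finset.sum_congr rfl (fun t' _ => hMu t')]
    by_cases hκ : k 𝔱 x = 0
    · rw [hP0 x hκ, hzero x hκ, zero_mul, mul_zero]
    · simp only [hdag]
      calc Mg P (insert 𝔱 F) x * (∏ g ∈ Fᶜ.erase 𝔱, k g x)
            * ∑ t' : S 𝔱, Mg P (insert 𝔱 F) (Function.update x 𝔱 t')
          = Mg P (insert 𝔱 F) x * ∑ t' : S 𝔱, (∏ g ∈ Fᶜ.erase 𝔱, k g x)
              * Mg P (insert 𝔱 F) (Function.update x 𝔱 t') := by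
            rw [mul_assoc, Finset.mul_sum]
        _ = Mg P (insert 𝔱 F) x * ∑ t' : S 𝔱,
              Mg P (insert 𝔱 F) (Function.update x 𝔱 t')
                * ∏ g ∈ Fᶜ.erase 𝔱, k g (Function.update x 𝔱 t') := by
            rw [Finset.sum_congr rfl (fun t' _ => hswap x t' hκ)]
        _ = (∑ t' : S 𝔱, Mg P (insert 𝔱 F) (Function.update x 𝔱 t')
              * ∏ g ∈ Fᶜ.erase 𝔱, k g (Function.update x 𝔱 t'))
            * Mg P (insert 𝔱 F) x := mul_comm _ _
  -- faithfulness gives d-separation of f and 𝔱 by F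
  have hDS : DSep E (↑F) f 𝔱 := by
    refine hfaithful ((insert 𝔱 F)ᶜ) {𝔱} F ?_ ?_ hCI f ?_ 𝔱 (Finset.mem_singleton_self 𝔱)
    · intro a ha
      rw [Finset.mem_compl, Finset.mem_insert] at ha
      push_neg at ha
      exact ⟨by simpa using ha.1, ha.2⟩
    · intro b hb
      rw [Finset.mem_singleton] at hb
      rw [hb]; exact h𝔱F
    · rw [Finset.mem_compl, Finset.mem_insert]
      push_neg
      exact ⟨hf𝔱, hfF⟩
  -- the direct edge 𝔱 → f cannot be blocked
  have hblocked := hDS 1 (fun i => if i = 0 then f else 𝔱) one_pos (by simp) (by simp)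
    (by
      intro i hi j hj hij
      rcases Nat.le_one_iff_eq_zero_or_eq_one.mp hi with rfl | rfl <;>
        rcases Nat.le_one_iff_eq_zero_or_eq_one.mp hj with rfl | rfl
      · rfl
      · exact absurd (show f = 𝔱 by simpa using hij) hf𝔱
      · exact absurd (show 𝔱 = f by simpa using hij) (Ne.symm hf𝔱)
      · rfl)
    (by
      intro i hi
      have hi0 : i = 0 := by omega
      subst hi0
      right
      simpa using hEf)
  obtain ⟨i, h1, h2, -⟩ := hblocked
  omega
end

section
/- Let (G, P_f) be a faithful Bayes network with root node 𝔱, and let f be a child of 𝔱. Then there exists a measurable set W of time values with P_G(T ∈ W) > 0 such that in ANY Bayes network (G_W, P_{W,g}) over the features 𝔉 representing P_G(X ∈ · | T ∈ W) and agreeing with (G, P_g) in structure for nodes other than children of 𝔱, the kernel at f must differ: P_{W,f} ≠ P_f. -/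
open scoped ENNReal BigOperators

/-!
Take `W` to be the whole range of `𝔱`. A competing network whose graph has no edge at `𝔱` and
whose kernel at `f` is `k f` forces `k f` to be invariant under changing the time coordinate, so
`k f` depends only on `f` and its remaining parents `Z`. Summing out the descendants of `f` one
source at a time (each kernel integrates to one) then gives `𝔱 ⫫ f | Z`, and faithfulness would
make `Z` d-separate the adjacent nodes `𝔱` and `f`, which no set does. Positivity of the window
follows the same way, since the zero mass satisfies every conditional independence.
-/

open Function

namespace BayesNet

section Graph

variable {V : Type*} {S : V → Type*}

def IsLocal (E : V → V → Prop) (k : V → (∀ v, S v) → ℝ≥0∞) : Prop :=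
  ∀ (f : V) (x y : ∀ v, S v), (∀ g, E g f → x g = y g) → x f = y f → k f x = k f y

def IsChildClosed (E : V → V → Prop) (D : Finset V) : Prop :=
  ∀ v ∈ D, ∀ w, E v w → w ∈ D

theorem exists_mem_forall_not_adj [Finite V] {E : V → V → Prop}
    (hacyclic : ∀ v, ¬ Relation.TransGen E v v) {D : Finset V} (hD : D.Nonempty) :
    ∃ s ∈ D, ∀ g ∈ D, ¬ E g s := by
  have : IsStrictOrder V (Relation.TransGen E) :=
    { irrefl := hacyclic, trans := fun _ _ _ => .trans }
  obtain ⟨s, hs, hmin⟩ := (Finite.wellFounded_of_trans_of_irrefl (Relation.TransGen E)).has_min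
    (D : Set V) hD
  exact ⟨s, hs, fun g hg hgs => hmin g hg (.single hgs)⟩

theorem prod_compl_update_eq [Fintype V] [DecidableEq V] {E : V → V → Prop}
    {k : V → (∀ v, S v) → ℝ≥0∞} (hloc : IsLocal E k) {D : Finset V} (hD : IsChildClosed E D)
    {s : V} (hs : s ∈ D) (y : ∀ v, S v) (a : S s) :
    ∏ g ∈ Dᶜ, k g (update y s a) = ∏ g ∈ Dᶜ, k g y := by
  refine Finset.prod_congr rfl fun g hg => hloc g _ _ (fun h hhg => ?_) ?_
  · refine update_of_ne ?_ _ _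
    rintro rfl
    exact Finset.mem_compl.mp hg (hD h hs g hhg)
  · exact update_of_ne (ne_of_mem_of_not_mem hs (Finset.mem_compl.mp hg)).symm _ _

theorem IsLocal.dependsOn_of_update_invariant [DecidableEq V] {E : V → V → Prop}
    {k : V → (∀ v, S v) → ℝ≥0∞} (hloc : IsLocal E k) {t f : V} (htf : t ≠ f) {Z : Finset V}
    (hpa : ∀ g, E g f → g = t ∨ g ∈ Z) (hinv : ∀ y a, k f (update y t a) = k f y) :
    DependsOn (k f) ↑(insert f Z) := by
  intro x y hxy
  rw [← hinv x (y t)]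
  refine hloc f _ _ (fun g hg => ?_) ?_
  · rcases eq_or_ne g t with rfl | hgt
    · exact update_self ..
    · rw [update_of_ne hgt]
      exact hxy g (by simp [(hpa g hg).resolve_left hgt])
  · rw [update_of_ne htf.symm]
    exact hxy f (by simp)

theorem not_dSep_of_adj {E : V → V → Prop} (Z : Set V) {a b : V} (hab : E a b) (hne : a ≠ b) :
    ¬ DSep E Z a b := by
  intro h
  obtain ⟨i, hi0, hi1, -⟩ := h 1 (fun i => if i = 0 then a else b) one_pos rfl rfl
    (fun i hi j hj hij => by interval_cases i <;> interval_cases j <;> simp_all)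
    (fun i hi => by interval_cases i; exact Or.inl hab)
  omega

end Graph

variable {V : Type*} [Fintype V] [DecidableEq V] {S : V → Type*}
  [∀ v, Fintype (S v)] [∀ v, DecidableEq (S v)]

def IsNormalized (k : V → (∀ v, S v) → ℝ≥0∞) : Prop :=
  ∀ (f : V) (x : ∀ v, S v), ∑ a : S f, k f (update x f a) = 1

theorem sum_eq_sum_ite_sum_update (m : V) (c : S m) (φ : (∀ v, S v) → ℝ≥0∞) :
    ∑ y, φ y = ∑ y, if y m = c then ∑ a, φ (update y m a) else 0 := by
  have hupd : ∀ (a b : S m) (z : ∀ v : { v // v ≠ m }, S v.1),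
      update ((Equiv.piSplitAt m S).symm (b, z)) m a = (Equiv.piSplitAt m S).symm (a, z) := by
    intro a b z
    funext v
    rcases eq_or_ne v m with rfl | hv
    · simp [Equiv.piSplitAt_symm_apply]
    · simp [Equiv.piSplitAt_symm_apply, hv]
  rw [← (Equiv.piSplitAt m S).symm.sum_comp, ← (Equiv.piSplitAt m S).symm.sum_comp,
    Fintype.sum_prod_type, Fintype.sum_prod_type]
  simp [Equiv.piSplitAt_symm_apply, hupd]
  exact Finset.sum_comm

theorem Mg_mul_eq_Mg_insert {m : V} {U : Finset V} (hm : m ∉ U) (x : ∀ v, S v)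
    {κ F : (∀ v, S v) → ℝ≥0∞} (hκ : ∀ y, ∑ a, κ (update y m a) = 1)
    (hF : ∀ y a, F (update y m a) = F y) :
    Mg (fun y => κ y * F y) U x = Mg F (insert m U) x := by
  unfold Mg
  rw [sum_eq_sum_ite_sum_update m (x m)]
  refine Finset.sum_congr rfl fun y _ => ?_
  have hU : ∀ a, (∀ v ∈ U, update y m a v = x v) ↔ ∀ v ∈ U, y v = x v := fun a =>
    forall₂_congr fun v hv => by rw [update_of_ne (ne_of_mem_of_not_mem hv hm)]
  by_cases hym : y m = x m
  · simp_rw [hU, hF, Finset.forall_mem_insert, hym, true_and, if_true]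
    split_ifs
    · rw [← Finset.sum_mul, hκ, one_mul]
    · simp
  · simp [hym]

theorem Mg_mul_eq_mul_Mg {U : Finset V} {x : ∀ v, S v} {c : ℝ≥0∞} {κ F : (∀ v, S v) → ℝ≥0∞}
    (hκ : ∀ y, (∀ v ∈ U, y v = x v) → κ y = c) :
    Mg (fun y => κ y * F y) U x = c * Mg F U x := by
  unfold Mg
  rw [Finset.mul_sum]
  refine Finset.sum_congr rfl fun y _ => ?_
  split_ifs with hy
  · exact congrArg (· * F y) (hκ y hy)
  · rw [mul_zero]

theorem condIndepSets_of_forall_eq_zero {P : (∀ v, S v) → ℝ≥0∞} (hP : ∀ y, P y = 0)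
    (A B Z : Finset V) : CondIndepSets P A B Z := fun x => by
  simp [Mg, hP]

variable {E : V → V → Prop} {k : V → (∀ v, S v) → ℝ≥0∞}

theorem Mg_prod_compl_erase (hloc : IsLocal E k) (hnorm : IsNormalized k) {D U : Finset V}
    (hD : IsChildClosed E D) {s : V} (hs : s ∈ D) (hsU : s ∉ U) (x : ∀ v, S v) :
    Mg (fun y => ∏ g ∈ (D.erase s)ᶜ, k g y) (U ∪ D.erase s) x =
      Mg (fun y => ∏ g ∈ Dᶜ, k g y) (U ∪ D) x := by
  have hsplit : ∀ y, ∏ g ∈ (D.erase s)ᶜ, k g y = k s y * ∏ g ∈ Dᶜ, k g y := fun y => by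
    rw [Finset.compl_erase, Finset.prod_insert (Finset.notMem_compl.mpr hs)]
  simp_rw [hsplit]
  rw [Mg_mul_eq_Mg_insert (by simp [hsU]) x (hnorm s) (prod_compl_update_eq hloc hD hs),
    ← Finset.union_insert, Finset.insert_erase hs]

theorem Mg_prod_eq_Mg_prod_compl (hacyclic : ∀ v, ¬ Relation.TransGen E v v)
    (hloc : IsLocal E k) (hnorm : IsNormalized k) {D U : Finset V} (hD : IsChildClosed E D)
    (hDU : Disjoint D U) (x : ∀ v, S v) :
    Mg (fun y => ∏ g, k g y) U x = Mg (fun y => ∏ g ∈ Dᶜ, k g y) (U ∪ D) x := by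
  induction D using Finset.strongInduction with
  | H D ih =>
    rcases D.eq_empty_or_nonempty with rfl | hne
    · simp
    obtain ⟨s, hs, hsource⟩ := exists_mem_forall_not_adj hacyclic hne
    have hD' : IsChildClosed E (D.erase s) := fun v hv w hvw =>
      Finset.mem_erase.mpr ⟨by rintro rfl; exact hsource v (Finset.mem_of_mem_erase hv) hvw,
        hD v (Finset.mem_of_mem_erase hv) w hvw⟩
    rw [ih _ (Finset.erase_ssubset hs) hD'
        (Finset.disjoint_of_subset_left (Finset.erase_subset _ _) hDU),
      Mg_prod_compl_erase hloc hnorm hD hs (Finset.disjoint_left.mp hDU hs)]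

theorem Mg_prod_insert_eq_mul (hacyclic : ∀ v, ¬ Relation.TransGen E v v)
    (hloc : IsLocal E k) (hnorm : IsNormalized k) {f : V} {D U : Finset V}
    (hD : IsChildClosed E D) (hfD : f ∉ D)
    (hDU : Disjoint (insert f D) U) (x : ∀ v, S v) (hkf : DependsOn (k f) ↑(insert f U)) :
    Mg (fun y => ∏ g, k g y) (insert f U) x =
      k f x * Mg (fun y => ∏ g ∈ (insert f D)ᶜ, k g y) (U ∪ insert f D) x := by
  have hsplit : ∀ y, ∏ g ∈ Dᶜ, k g y = k f y * ∏ g ∈ (insert f D)ᶜ, k g y := fun y => by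
    rw [Finset.compl_insert]
    exact (Finset.mul_prod_erase _ (k · y) (Finset.mem_compl.mpr hfD)).symm
  have hDU' : Disjoint D (insert f U) :=
    Finset.disjoint_insert_right.mpr ⟨hfD, Finset.disjoint_of_subset_left
      (Finset.subset_insert f D) hDU⟩
  rw [Mg_prod_eq_Mg_prod_compl hacyclic hloc hnorm hD hDU', Finset.insert_union,
    ← Finset.union_insert]
  simp_rw [hsplit]
  have hsub : insert f U ⊆ U ∪ insert f D :=
    Finset.insert_subset (by simp) Finset.subset_union_left
  exact Mg_mul_eq_mul_Mg fun y hy => hkf.mono (Finset.coe_subset.mpr hsub) hy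

theorem condIndepSets_of_dependsOn (hacyclic : ∀ v, ¬ Relation.TransGen E v v)
    (hloc : IsLocal E k) (hnorm : IsNormalized k) {f : V} {A Z : Finset V}
    (hA : ∀ v ∈ A, ¬ Relation.ReflTransGen E f v) (hZ : ∀ v ∈ Z, ¬ Relation.ReflTransGen E f v)
    (hkf : DependsOn (k f) ↑(insert f Z)) :
    CondIndepSets (fun y => ∏ g, k g y) A {f} Z := by
  classical
  set D := Finset.univ.filter (Relation.TransGen E f)
  have hsucc : ∀ v ∈ insert f D, ∀ w, E v w → w ∈ D := by
    intro v hv w hvw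
    rcases Finset.mem_insert.mp hv with rfl | hv
    · simpa [D] using Relation.TransGen.single hvw
    · simpa [D] using (Finset.mem_filter.mp hv).2.tail hvw
  have hD : IsChildClosed E D := fun v hv => hsucc v (Finset.mem_insert_of_mem hv)
  have hfD' : IsChildClosed E (insert f D) := fun v hv w hvw =>
    Finset.mem_insert_of_mem (hsucc v hv w hvw)
  have hfD : f ∉ D := by simpa [D] using hacyclic f
  have hdisj : ∀ U : Finset V, (∀ v ∈ U, ¬ Relation.ReflTransGen E f v) →
      Disjoint (insert f D) U := by
    refine fun U hU => Finset.disjoint_left.mpr fun v hv hvU => hU v hvU ?_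
    rcases Finset.mem_insert.mp hv with rfl | hv
    · exact .refl
    · exact (Finset.mem_filter.mp hv).2.to_reflTransGen
  have hAZ : ∀ v ∈ A ∪ Z, ¬ Relation.ReflTransGen E f v := by
    simpa only [Finset.mem_union, or_imp, forall_and] using ⟨hA, hZ⟩
  intro x
  have hAfZ : A ∪ {f} ∪ Z = insert f (A ∪ Z) := by
    ext; simp only [Finset.mem_union, Finset.mem_singleton, Finset.mem_insert]; tauto
  rw [hAfZ, ← Finset.insert_eq,
    Mg_prod_insert_eq_mul hacyclic hloc hnorm hD hfD (hdisj _ hAZ) x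
      (hkf.mono (Finset.coe_subset.mpr (Finset.insert_subset_insert _ Finset.subset_union_right))),
    Mg_prod_insert_eq_mul hacyclic hloc hnorm hD hfD (hdisj _ hZ) x hkf,
    Mg_prod_eq_Mg_prod_compl hacyclic hloc hnorm hfD' (hdisj _ hAZ),
    Mg_prod_eq_Mg_prod_compl hacyclic hloc hnorm hfD' (hdisj _ hZ)]
  ring

end BayesNet

theorem stmt_17_general {V : Type*} [Fintype V] [DecidableEq V]
    {S : V → Type*} [∀ v, Fintype (S v)] [∀ v, DecidableEq (S v)]
    (E : V → V → Prop)
    (hacyclic : ∀ v, ¬ Relation.TransGen E v v)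
    (k : ∀ _ : V, (∀ v, S v) → ℝ≥0∞)
    (hloc : ∀ (f : V) (x y : ∀ v, S v),
      (∀ g, E g f → x g = y g) → x f = y f → k f x = k f y)
    (hnorm : ∀ (f : V) (x : ∀ v, S v), ∑ a : S f, k f (Function.update x f a) = 1)
    (P : (∀ v, S v) → ℝ≥0∞) (hP : ∀ x, P x = ∏ g, k g x)
    (𝔱 : V)
    (hfaithful : ∀ A B Z : Finset V,
      (∀ a ∈ A, a ∉ B ∧ a ∉ Z) → (∀ b ∈ B, b ∉ Z) →
      CondIndepSets P A B Z → ∀ a ∈ A, ∀ b ∈ B, DSep E (↑Z) a b)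
    (f : V) (hchild : E 𝔱 f) :
    ∃ W : Finset (S 𝔱),
      0 < (∑ y : ∀ v, S v, if y 𝔱 ∈ W then P y else 0) ∧
      ∀ (E' : V → V → Prop) (q : ∀ _ : V, (∀ v, S v) → ℝ≥0∞),
        (∀ v, ¬ Relation.TransGen E' v v) →
        (∀ g, ¬ E' g 𝔱 ∧ ¬ E' 𝔱 g) →
        (∀ (g : V) (x y : ∀ v, S v), g ≠ 𝔱 →
          (∀ h, E' h g → x h = y h) → x g = y g → q g x = q g y) →
        (∀ (g : V) (x : ∀ v, S v), g ≠ 𝔱 →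
          ∑ a : S g, q g (Function.update x g a) = 1) →
        -- `(G', q)` represents the window-conditional distribution:
        (∀ x : ∀ v, S v,
          (∏ g ∈ ({𝔱} : Finset V)ᶜ, q g x) =
            (∑ y : ∀ v, S v, if (∀ v, v ≠ 𝔱 → y v = x v) ∧ y 𝔱 ∈ W then P y else 0) /
            (∑ y : ∀ v, S v, if y 𝔱 ∈ W then P y else 0)) →
        -- kernels agree in structure for nodes other than children of `𝔱`:
        (∀ g, ¬ E 𝔱 g → g ≠ 𝔱 → q g = k g) →
        q f ≠ k f := by
  classical
  obtain rfl : P = fun y => ∏ g, k g y := funext hP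
  have htf : 𝔱 ≠ f := fun h => hacyclic f (.single (h ▸ hchild))
  set Z := Finset.univ.filter fun g => E g f ∧ g ≠ 𝔱
  have hZ : ∀ v ∈ Z, ¬ Relation.ReflTransGen E f v := fun v hv hfv =>
    hacyclic v (.head' (Finset.mem_filter.mp hv).2.1 hfv)
  have hnotCI : ¬ CondIndepSets (fun y => ∏ g, k g y) {𝔱} {f} Z := fun hCI =>
    BayesNet.not_dSep_of_adj _ hchild htf <|
      hfaithful {𝔱} {f} Z (by simp [htf, Z])
        (by simpa [Z] using fun h => absurd (.single h) (hacyclic f)) hCI 𝔱 (Finset.mem_singleton_self _) f (Finset.mem_singleton_self _)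
  refine ⟨Finset.univ, ?_, fun E' q _ hE' hqloc _ _ _ hqf => ?_⟩
  · simp only [Finset.mem_univ, if_true, pos_iff_ne_zero, ne_eq, Finset.sum_eq_zero_iff,
      true_imp_iff]
    exact fun hzero => hnotCI (BayesNet.condIndepSets_of_forall_eq_zero hzero _ _ _)
  have hinv : ∀ y a, k f (Function.update y 𝔱 a) = k f y := fun y a => by
    rw [← hqf]
    refine hqloc f _ _ htf.symm (fun h hh => Function.update_of_ne ?_ _ _)
      (Function.update_of_ne htf.symm _ _)
    rintro rfl
    exact (hE' f).2 hh
  refine hnotCI (BayesNet.condIndepSets_of_dependsOn hacyclic hloc hnorm ?_ hZ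
    (BayesNet.IsLocal.dependsOn_of_update_invariant hloc htf (fun g hg => ?_) hinv))
  · simpa using fun h => hacyclic 𝔱 (Relation.TransGen.head' hchild h)
  · by_cases hgt : g = 𝔱 <;> simp [Z, hg, hgt]

/-- (Minimality half of Theorem 4, discrete Bayes-network model.)
If `(G, k)` is faithful and `f` is a child of the root time node `𝔱`, then there is a
time window `W` of positive probability such that ANY Bayes network over the non-time
features that represents the conditional distribution `P_G(X ∈ · | T ∈ W)` and whose
kernels agree with the original ones on all nodes other than children of `𝔱` must
have a kernel at `f` different from `k f`. -/
theorem stmt_17 {V : Type*} [Fintype V] [DecidableEq V]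
    {S : V → Type*} [∀ v, Fintype (S v)] [∀ v, DecidableEq (S v)]
    (E : V → V → Prop)
    (hacyclic : ∀ v, ¬ Relation.TransGen E v v)
    (k : ∀ _ : V, (∀ v, S v) → ℝ≥0∞)
    (hloc : ∀ (f : V) (x y : ∀ v, S v),
      (∀ g, E g f → x g = y g) → x f = y f → k f x = k f y)
    (hnorm : ∀ (f : V) (x : ∀ v, S v), ∑ a : S f, k f (Function.update x f a) = 1)
    (P : (∀ v, S v) → ℝ≥0∞) (hP : ∀ x, P x = ∏ g, k g x)
    (𝔱 : V) (hroot : ∀ g, ¬ E g 𝔱)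
    (hfaithful : ∀ A B Z : Finset V,
      (∀ a ∈ A, a ∉ B ∧ a ∉ Z) → (∀ b ∈ B, b ∉ Z) →
      CondIndepSets P A B Z → ∀ a ∈ A, ∀ b ∈ B, DSep E (↑Z) a b)
    (f : V) (hchild : E 𝔱 f) :
    ∃ W : Finset (S 𝔱),
      0 < (∑ y : ∀ v, S v, if y 𝔱 ∈ W then P y else 0) ∧
      ∀ (E' : V → V → Prop) (q : ∀ _ : V, (∀ v, S v) → ℝ≥0∞),
        (∀ v, ¬ Relation.TransGen E' v v) →
        (∀ g, ¬ E' g 𝔱 ∧ ¬ E' 𝔱 g) →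
        (∀ (g : V) (x y : ∀ v, S v), g ≠ 𝔱 →
          (∀ h, E' h g → x h = y h) → x g = y g → q g x = q g y) →
        (∀ (g : V) (x : ∀ v, S v), g ≠ 𝔱 →
          ∑ a : S g, q g (Function.update x g a) = 1) →
        -- `(G', q)` represents the window-conditional distribution:
        (∀ x : ∀ v, S v,
          (∏ g ∈ ({𝔱} : Finset V)ᶜ, q g x) =
            (∑ y : ∀ v, S v, if (∀ v, v ≠ 𝔱 → y v = x v) ∧ y 𝔱 ∈ W then P y else 0) /
            (∑ y : ∀ v, S v, if y 𝔱 ∈ W then P y else 0)) →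
        -- kernels agree in structure for nodes other than children of `𝔱`:
        (∀ g, ¬ E 𝔱 g → g ≠ 𝔱 → q g = k g) →
        q f ≠ k f :=
  stmt_17_general E hacyclic k hloc hnorm P hP 𝔱 hfaithful f hchild
end
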